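/- arXiv:2406.02170 — 4 statements merged into one kernel-verified Lean document; each statement's English description precedes it below -/
import Mathlib

section
/- Fix Θ_t ∈ ℂ^{M×M} and set H_t = H̄_eq(Θ_t), R_t = (1/σ²)·I_{N_R} − (σ²·I_{N_R} + H_t H_tᴴ)⁻¹, F_t = R_t^{1/2} F (the PSD square root of R_t times F), Z_t = (1/σ²)·H_tᴴ − H̄ᴴ R_t, and define J(Θ) = 2·Re tr(Z_t F Θ Ḡᴴ) − ‖F_t Θ Ḡᴴ‖_F². Then there exists a real constant A_t, independent of Θ, such that for all Θ ∈ ℂ^{M×M}: C(Θ_t) + (2/σ²)·Re tr(H_t (H̄_eq(Θ) − H_t)ᴴ) − tr(R_tᴴ (H̄_eq(Θ) H̄_eq(Θ)ᴴ − H_t H_tᴴ)) = A_t + J(Θ). -/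
/-!
Write `H̄_eq(Θ) = H̄ + X` with `X = F Θ Ḡᴴ`. The left-hand side is then a quadratic polynomial
in `X`: its constant term does not depend on `Θ`; cyclicity of the trace and `R_tᴴ = R_t` turn
its linear term into `2 Re tr(Z_t X)`; its quadratic term is
`-Re tr(Xᴴ R_t X) = -‖R_t^{1/2} X‖_F²` because `R_t^{1/2}` is Hermitian and squares to `R_t`.
-/

open Matrix
open scoped ComplexOrder

noncomputable def Matrix.PosSemidef.sqrt {n 𝕜 : Type*} [Fintype n] [RCLike 𝕜] [DecidableEq n]
    {A : Matrix n n 𝕜} (hA : A.PosSemidef) : Matrix n n 𝕜 :=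
  hA.isHermitian.eigenvectorUnitary.1 * diagonal ((↑) ∘ (√·) ∘ hA.isHermitian.eigenvalues) *
  (star hA.isHermitian.eigenvectorUnitary : Matrix n n 𝕜)

open scoped MatrixOrder

namespace Matrix.PosSemidef

variable {n 𝕜 : Type*} [Fintype n] [RCLike 𝕜] [DecidableEq n] {A : Matrix n n 𝕜}

theorem sqrt_eq_cfcSqrt (hA : A.PosSemidef) : hA.sqrt = CFC.sqrt A := by
  rw [CFC.sqrt_eq_cfc, cfc_nnreal_eq_real _ A hA.nonneg, hA.isHermitian.cfc_eq,
    IsHermitian.cfc, Unitary.conjStarAlgAut_apply, PosSemidef.sqrt]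
  congr 3
  ext i
  simp [hA.eigenvalues_nonneg i]

theorem conjTranspose_sqrt_mul_mul_sqrt_mul {m : Type*} (hA : A.PosSemidef) (B : Matrix n m 𝕜) :
    (hA.sqrt * B)ᴴ * (hA.sqrt * B) = Bᴴ * A * B := by
  have hS : hA.sqrtᴴ = hA.sqrt := by
    rw [sqrt_eq_cfcSqrt]
    exact (CFC.sqrt_nonneg A).posSemidef.isHermitian
  rw [conjTranspose_mul, hS, Matrix.mul_assoc, ← Matrix.mul_assoc hA.sqrt, sqrt_eq_cfcSqrt,
    CFC.sqrt_mul_sqrt_self A hA.nonneg, Matrix.mul_assoc]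

end Matrix.PosSemidef

namespace Matrix

variable {m n 𝕜 : Type*} [Fintype m] [Fintype n] [RCLike 𝕜]

open RCLike

theorem re_trace_mul_conjTranspose (A B : Matrix m n 𝕜) :
    re (A * Bᴴ).trace = re (Aᴴ * B).trace := by
  rw [trace_mul_comm, ← conjTranspose_conjTranspose (Bᴴ * A), trace_conjTranspose,
    conjTranspose_mul, conjTranspose_conjTranspose, star_def, conj_re]

theorem IsHermitian.re_trace_conjTranspose_mul_mul_comm {R : Matrix m m 𝕜} (hR : R.IsHermitian)
    (A B : Matrix m n 𝕜) : re (Aᴴ * R * B).trace = re (Bᴴ * R * A).trace := by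
  rw [← conjTranspose_conjTranspose (Bᴴ * R * A), trace_conjTranspose]
  simp only [conjTranspose_mul, conjTranspose_conjTranspose, hR.eq, Matrix.mul_assoc, star_def,
    conj_re]

theorem IsHermitian.re_trace_mul_add_mul_conjTranspose_add {R : Matrix m m 𝕜}
    (hR : R.IsHermitian) (A B : Matrix m n 𝕜) :
    re (R * ((A + B) * (A + B)ᴴ)).trace
      = re (R * (A * Aᴴ)).trace + 2 * re (Aᴴ * R * B).trace + re (Bᴴ * R * B).trace := by
  have cyc (P Q : Matrix m n 𝕜) : (R * (P * Qᴴ)).trace = (Qᴴ * R * P).trace := by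
    rw [← Matrix.mul_assoc, trace_mul_comm, Matrix.mul_assoc]
  simp only [conjTranspose_add, Matrix.add_mul, Matrix.mul_add, trace_add, map_add, cyc,
    hR.re_trace_conjTranspose_mul_mul_comm B A]
  ring

theorem IsHermitian.minorizer_add_eq {R : Matrix m m 𝕜} (hR : R.IsHermitian) (σ : ℝ)
    (H₀ H X : Matrix m n 𝕜) :
    (2 / σ) * re (H * (H₀ + X - H)ᴴ).trace - re (Rᴴ * ((H₀ + X) * (H₀ + X)ᴴ - H * Hᴴ)).trace
      = ((2 / σ) * re (H * (H₀ - H)ᴴ).trace - re (Rᴴ * (H₀ * H₀ᴴ - H * Hᴴ)).trace)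
        + 2 * re ((σ⁻¹ • Hᴴ - H₀ᴴ * R) * X).trace - re (Xᴴ * R * X).trace := by
  rw [add_sub_right_comm, conjTranspose_add, Matrix.mul_add, trace_add, map_add,
    re_trace_mul_conjTranspose H X, hR.eq, Matrix.mul_sub, trace_sub, map_sub,
    hR.re_trace_mul_add_mul_conjTranspose_add, Matrix.mul_sub, trace_sub, map_sub]
  simp only [Matrix.sub_mul, Matrix.smul_mul, Matrix.mul_assoc, trace_sub, trace_smul, map_sub,
    smul_re]
  ring

end Matrix

theorem minorizer_eq_const_add_J_general {NR NT M : ℕ}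
    (Hb : Matrix (Fin NR) (Fin NT) ℂ) (F : Matrix (Fin NR) (Fin M) ℂ)
    (Gb : Matrix (Fin NT) (Fin M) ℂ) (σ2 : ℝ)
    (Heq : Matrix (Fin M) (Fin M) ℂ → Matrix (Fin NR) (Fin NT) ℂ)
    (hHeq : ∀ Θ, Heq Θ = Hb + F * Θ * Gbᴴ)
    (C : Matrix (Fin M) (Fin M) ℂ → ℝ)
    (Θt : Matrix (Fin M) (Fin M) ℂ)
    (Ht : Matrix (Fin NR) (Fin NT) ℂ)
    (Rt : Matrix (Fin NR) (Fin NR) ℂ)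
    (hRtPSD : Rt.PosSemidef)
    (Ft : Matrix (Fin NR) (Fin M) ℂ) (hFt : Ft = hRtPSD.sqrt * F)
    (Zt : Matrix (Fin NT) (Fin NR) ℂ) (hZt : Zt = σ2⁻¹ • Htᴴ - Hbᴴ * Rt)
    (J : Matrix (Fin M) (Fin M) ℂ → ℝ)
    (hJ : ∀ Θ, J Θ = 2 * (Matrix.trace (Zt * F * Θ * Gbᴴ)).re
        - (Matrix.trace ((Ft * Θ * Gbᴴ)ᴴ * (Ft * Θ * Gbᴴ))).re) :
    ∃ At : ℝ, ∀ Θ : Matrix (Fin M) (Fin M) ℂ,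
      C Θt + (2 / σ2) * (Matrix.trace (Ht * (Heq Θ - Ht)ᴴ)).re
        - (Matrix.trace (Rtᴴ * (Heq Θ * (Heq Θ)ᴴ - Ht * Htᴴ))).re
      = At + J Θ := by
  refine ⟨C Θt + ((2 / σ2) * (Ht * (Hb - Ht)ᴴ).trace.re - (Rtᴴ * (Hb * Hbᴴ - Ht * Htᴴ)).trace.re),
    fun Θ => ?_⟩
  have hFtX : Ft * Θ * Gbᴴ = hRtPSD.sqrt * (F * Θ * Gbᴴ) := by
    rw [hFt, Matrix.mul_assoc, Matrix.mul_assoc, Matrix.mul_assoc]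
  have hZtX : Zt * F * Θ * Gbᴴ = (σ2⁻¹ • Htᴴ - Hbᴴ * Rt) * (F * Θ * Gbᴴ) := by
    rw [hZt, Matrix.mul_assoc, Matrix.mul_assoc, Matrix.mul_assoc]
  have h := hRtPSD.isHermitian.minorizer_add_eq σ2 Hb Ht (F * Θ * Gbᴴ)
  simp only [RCLike.re_to_complex] at h
  rw [hJ, hHeq, hFtX, hZtX, hRtPSD.conjTranspose_sqrt_mul_mul_sqrt_mul, add_sub_assoc, h]
  ring

/-- The minorizer of the capacity equals, up to a constant `A_t` independent of
`Θ`, the quadratic function `J(Θ) = 2 Re tr(Z_t F Θ Ḡᴴ) − ‖F_t Θ Ḡᴴ‖_F²`. -/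
theorem minorizer_eq_const_add_J {NR NT M : ℕ}
    (Hb : Matrix (Fin NR) (Fin NT) ℂ) (F : Matrix (Fin NR) (Fin M) ℂ)
    (Gb : Matrix (Fin NT) (Fin M) ℂ) (σ2 : ℝ) (hσ : 0 < σ2)
    (Heq : Matrix (Fin M) (Fin M) ℂ → Matrix (Fin NR) (Fin NT) ℂ)
    (hHeq : ∀ Θ, Heq Θ = Hb + F * Θ * Gbᴴ)
    (C : Matrix (Fin M) (Fin M) ℂ → ℝ)
    (hC : ∀ Θ, C Θ = Real.log ((1 + σ2⁻¹ • (Heq Θ * (Heq Θ)ᴴ)).det.re))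
    (Θt : Matrix (Fin M) (Fin M) ℂ)
    (Ht : Matrix (Fin NR) (Fin NT) ℂ) (hHt : Ht = Heq Θt)
    (Rt : Matrix (Fin NR) (Fin NR) ℂ)
    (hRt : Rt = σ2⁻¹ • (1 : Matrix (Fin NR) (Fin NR) ℂ)
        - (σ2 • (1 : Matrix (Fin NR) (Fin NR) ℂ) + Ht * Htᴴ)⁻¹)
    (hRtPSD : Rt.PosSemidef)
    (Ft : Matrix (Fin NR) (Fin M) ℂ) (hFt : Ft = hRtPSD.sqrt * F)
    (Zt : Matrix (Fin NT) (Fin NR) ℂ) (hZt : Zt = σ2⁻¹ • Htᴴ - Hbᴴ * Rt)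
    (J : Matrix (Fin M) (Fin M) ℂ → ℝ)
    (hJ : ∀ Θ, J Θ = 2 * (Matrix.trace (Zt * F * Θ * Gbᴴ)).re
        - (Matrix.trace ((Ft * Θ * Gbᴴ)ᴴ * (Ft * Θ * Gbᴴ))).re) :
    ∃ At : ℝ, ∀ Θ : Matrix (Fin M) (Fin M) ℂ,
      C Θt + (2 / σ2) * (Matrix.trace (Ht * (Heq Θ - Ht)ᴴ)).re
        - (Matrix.trace (Rtᴴ * (Heq Θ * (Heq Θ)ᴴ - Ht * Htᴴ))).re
      = At + J Θ :=
  minorizer_eq_const_add_J_general Hb F Gb σ2 Heq hHeq C Θt Ht Rt hRtPSD Ft hFt Zt hZt J hJ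
end

section
/- (Takagi/Autonne factorization of symmetric unitary matrices) If Θ ∈ ℂ^{M×M} satisfies ΘᴴΘ = I_M and Θ = Θᵀ, then there exists a unitary matrix Q ∈ ℂ^{M×M} (QᴴQ = I_M) such that Θ = Q Qᵀ. -/
/-!
A unitary matrix `Θ` is normal with spectrum on the unit circle, so the continuous functional
calculus gives a unitary square root `Q = √Θ`. The spectrum is finite, hence `Q` is a polynomial
in `Θ`, and a polynomial in a symmetric matrix is symmetric: `Q Qᵀ = Q² = Θ`.
-/

open Polynomial

theorem Matrix.IsSymm.aeval {R α n : Type*} [CommSemiring R] [CommSemiring α] [Algebra R α]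
    [Fintype n] [DecidableEq n] {A : Matrix n n α} (hA : A.IsSymm) (p : R[X]) :
    (aeval A p).IsSymm := by
  induction p using Polynomial.induction_on' with
  | add p q hp hq => simpa using hp.add hq
  | monomial k r => rw [aeval_monomial, ← Algebra.smul_def]; exact (hA.pow k).smul r

theorem Polynomial.exists_eval_eq_on_finite {F : Type*} [Field F] {s : Set F} (hs : s.Finite)
    (f : F → F) : ∃ p : F[X], ∀ x ∈ s, p.eval x = f x := by
  classical
  exact ⟨Lagrange.interpolate hs.toFinset id f, fun x hx =>
    Lagrange.eval_interpolate_at_node f Function.injective_id.injOn (hs.mem_toFinset.mpr hx)⟩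

theorem exists_cfc_eq_aeval {R A : Type*} {p : A → Prop} [Field R] [StarRing R] [MetricSpace R]
    [IsTopologicalRing R] [ContinuousStar R] [TopologicalSpace A] [Ring A] [StarRing A]
    [Algebra R A] [ContinuousFunctionalCalculus R A p] (f : R → R) {a : A}
    (hfin : (spectrum R a).Finite) (ha : p a := by cfc_tac) :
    ∃ q : R[X], cfc f a = aeval a q := by
  obtain ⟨q, hq⟩ := exists_eval_eq_on_finite hfin f
  exact ⟨q, by rw [← cfc_polynomial q a, cfc_congr fun x hx => (hq x hx).symm]⟩

theorem exists_aeval_mem_unitary_mul_self_eq {A : Type*} [TopologicalSpace A] [Ring A]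
    [StarRing A] [Algebra ℂ A] [ContinuousFunctionalCalculus ℂ A IsStarNormal] {u : A}
    (hu : u ∈ unitary A) (hfin : (spectrum ℂ u).Finite) :
    ∃ q : ℂ[X], aeval u q ∈ unitary A ∧ aeval u q * aeval u q = u := by
  have := isStarNormal_of_mem_unitary hu
  let sqrt : ℂ → ℂ := fun z => z ^ (2⁻¹ : ℂ)
  -- On a finite spectrum every function is continuous, so the branch cut of `sqrt` is harmless.
  have hcont : ContinuousOn sqrt (spectrum ℂ u) := hfin.continuousOn _
  obtain ⟨q, hq⟩ := exists_cfc_eq_aeval sqrt hfin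
  refine ⟨q, hq ▸ (cfc_unitary_iff sqrt u).mpr fun x hx => ?_, ?_⟩
  · have hx : ‖x‖ = 1 :=
      CStarRing.norm_of_mem_unitary (spectrum_subset_unitary_of_mem_unitary hu hx)
    have hnorm : ‖sqrt x‖ = ‖x‖ ^ (2⁻¹ : ℝ) := by simpa using Complex.norm_cpow_inv_nat x 2
    rw [RCLike.star_def, Complex.conj_mul', hnorm, hx]
    simp
  · rw [← hq, ← cfc_mul ..]
    refine (cfc_congr fun x _ => ?_).trans (cfc_id' ℂ u)
    simpa [sq] using Complex.cpow_nat_inv_pow x (n := 2) two_ne_zero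

open Matrix
open scoped Matrix.Norms.L2Operator in
/-- Takagi/Autonne factorization of symmetric unitary matrices:
every symmetric unitary `Θ` factors as `Θ = Q Qᵀ` with `Q` unitary. -/
theorem takagi_symmetric_unitary {M : ℕ} (Θ : Matrix (Fin M) (Fin M) ℂ)
    (hunit : Θᴴ * Θ = 1) (hsym : Θ = Θᵀ) :
    ∃ Q : Matrix (Fin M) (Fin M) ℂ, Qᴴ * Q = 1 ∧ Θ = Q * Qᵀ := by
  obtain ⟨q, hQ, hQQ⟩ := exists_aeval_mem_unitary_mul_self_eq
    (mem_unitaryGroup_iff'.mpr hunit) Θ.finite_spectrum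
  refine ⟨aeval Θ q, mem_unitaryGroup_iff'.mp hQ, ?_⟩
  rw [(IsSymm.aeval hsym.symm q).eq, hQQ]
end

section
/- (Ascent property of the MM step) Fix Θ_t ∈ ℂ^{M×M} and set H_t = H̄_eq(Θ_t), R_t = (1/σ²)·I_{N_R} − (σ²·I_{N_R} + H_t H_tᴴ)⁻¹, F_t = R_t^{1/2} F, Z_t = (1/σ²)·H_tᴴ − H̄ᴴ R_t, and J(Θ) = 2·Re tr(Z_t F Θ Ḡᴴ) − ‖F_t Θ Ḡᴴ‖_F². Then for every Θ ∈ ℂ^{M×M}: C(Θ) ≥ C(Θ_t) + (J(Θ) − J(Θ_t)). In particular, if Θ_{t+1} satisfies J(Θ_{t+1}) ≥ J(Θ_t), then C(Θ_{t+1}) ≥ C(Θ_t), so the capacity is nondecreasing along the iterations of the minorize-maximization algorithm. -/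
/-!
The minorizer is the WMMSE variational form of the capacity. Put `A = σ²I + HHᴴ`,
`W = I + σ⁻²HᴴH` (so that `C = log det W` by Sylvester's determinant identity) and, for a linear
receiver `U`, the error matrix `E(U) = I − UᴴH − HᴴU + UᴴAU`. Completing the square gives
`E(U) = W⁻¹ + (U − A⁻¹H)ᴴ A (U − A⁻¹H) ≥ W⁻¹`, and convexity of `−log det` gives
`log det W − log det W_t ≥ n − tr(W_t W⁻¹) ≥ n − tr(W_t E(U_t))` for the MMSE receiver
`U_t = A_t⁻¹H_t`, with equality at `H = H_t`. Expanding, `tr(W_t E(U_t))` is a constant minus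
`ψ(H) = 2σ⁻² Re tr(H_tᴴH) − tr(HᴴR_tH)`, and `J(Θ) = ψ(H̄ + FΘḠᴴ) − ψ(H̄)` because
`F_tᴴF_t = FᴴR_tF`.
-/

open Matrix
open scoped ComplexOrder MatrixOrder

namespace Matrix

variable {m n 𝕜 : Type*} [RCLike 𝕜] [Fintype n]

theorem re_trace_conjTranspose (A : Matrix n n 𝕜) : RCLike.re Aᴴ.trace = RCLike.re A.trace := by
  rw [trace_conjTranspose, RCLike.star_def, RCLike.conj_re]

variable [DecidableEq n]

theorem PosSemidef.sqrt_eq_eigenvectorUnitary_mul {Q : Matrix n n 𝕜} (hQ : Q.PosSemidef) :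
    CFC.sqrt Q = (hQ.1.eigenvectorUnitary : Matrix n n 𝕜) *
      diagonal ((↑) ∘ (√·) ∘ hQ.1.eigenvalues) * (star hQ.1.eigenvectorUnitary : Matrix n n 𝕜) := by
  rw [CFC.sqrt_eq_cfc, cfc_nnreal_eq_real _ Q hQ.nonneg, hQ.1.cfc_eq, IsHermitian.cfc,
    Unitary.conjStarAlgAut_apply]
  congr 3
  funext i
  simp [max_eq_left (hQ.eigenvalues_nonneg i)]

theorem PosSemidef.conjTranspose_sqrt_mul_mul_sqrt_mul_s11 {R : Matrix n n 𝕜} (hR : R.PosSemidef)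
    (D : Matrix n m 𝕜) : (CFC.sqrt R * D)ᴴ * (CFC.sqrt R * D) = Dᴴ * R * D := by
  have hS : (CFC.sqrt R)ᴴ = CFC.sqrt R := (CFC.sqrt_nonneg R).isSelfAdjoint
  rw [conjTranspose_mul, hS, Matrix.mul_assoc, ← Matrix.mul_assoc (CFC.sqrt R),
    CFC.sqrt_mul_sqrt_self R hR.nonneg, Matrix.mul_assoc]

theorem PosSemidef.trace_mul_nonneg {P Q : Matrix n n 𝕜} (hP : P.PosSemidef) (hQ : Q.PosSemidef) :
    0 ≤ (P * Q).trace := by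
  have hS : (CFC.sqrt Q)ᴴ = CFC.sqrt Q := (CFC.sqrt_nonneg Q).isSelfAdjoint
  have h : (P * Q).trace = ((CFC.sqrt Q)ᴴ * P * CFC.sqrt Q).trace := by
    conv_lhs => rw [← CFC.sqrt_mul_sqrt_self Q hQ.nonneg, ← Matrix.mul_assoc]
    rw [Matrix.trace_mul_cycle, hS]
  exact h ▸ (hP.conjTranspose_mul_mul_same _).trace_nonneg

theorem PosDef.log_det_le_trace_sub_card {X : Matrix n n 𝕜} (hX : X.PosDef) :
    Real.log (RCLike.re X.det) ≤ RCLike.re X.trace - Fintype.card n := by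
  have hpos := hX.eigenvalues_pos
  rw [hX.1.det_eq_prod_eigenvalues, hX.1.trace_eq_sum_eigenvalues, ← RCLike.ofReal_prod,
    ← RCLike.ofReal_sum, RCLike.ofReal_re, RCLike.ofReal_re, Real.log_prod fun i _ => (hpos i).ne']
  calc ∑ i, Real.log (hX.1.eigenvalues i) ≤ ∑ i, (hX.1.eigenvalues i - 1) :=
        Finset.sum_le_sum fun i _ => Real.log_le_sub_one_of_pos (hpos i)
    _ = _ := by simp [Finset.sum_sub_distrib]

theorem PosDef.log_det_sub_log_det_le {A B : Matrix n n 𝕜} (hA : A.PosDef) (hB : B.PosDef) :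
    Real.log (RCLike.re A.det) - Real.log (RCLike.re B.det) ≤
      RCLike.re (A * B⁻¹).trace - Fintype.card n := by
  set S := CFC.sqrt A
  have hS : Sᴴ = S := (CFC.sqrt_nonneg A).isSelfAdjoint
  have hSS : S * S = A := CFC.sqrt_mul_sqrt_self A hA.posSemidef.nonneg
  obtain ⟨a, ha, hdetA⟩ := RCLike.pos_iff_exists_ofReal.mp hA.det_pos
  obtain ⟨b, hb, hdetB⟩ := RCLike.pos_iff_exists_ofReal.mp hB.det_pos
  have hdetX : (S * B⁻¹ * S).det = ((a / b : ℝ) : 𝕜) := by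
    rw [det_mul, det_mul, mul_right_comm, ← det_mul, hSS, det_nonsing_inv, Ring.inverse_eq_inv,
      ← hdetA, ← hdetB, RCLike.ofReal_div, div_eq_mul_inv]
  have hX : (S * B⁻¹ * S).PosDef := by
    have hpsd := hB.inv.posSemidef.conjTranspose_mul_mul_same S
    rw [hS] at hpsd
    rw [hpsd.posDef_iff_det_ne_zero, hdetX]
    exact_mod_cast (div_pos ha hb).ne'
  have htrX : (S * B⁻¹ * S).trace = (A * B⁻¹).trace := by
    rw [Matrix.trace_mul_cycle, hSS]
  have := hX.log_det_le_trace_sub_card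
  rw [hdetX, htrX, RCLike.ofReal_re, Real.log_div ha.ne' hb.ne'] at this
  rwa [← hdetA, ← hdetB, RCLike.ofReal_re, RCLike.ofReal_re]

end Matrix

noncomputable section

namespace MIMO

variable {m n 𝕜 : Type*} [RCLike 𝕜] {s : ℝ}

section
variable [Fintype n] [DecidableEq m]

def covariance (s : ℝ) (H : Matrix m n 𝕜) : Matrix m m 𝕜 := s • 1 + H * Hᴴ

theorem covariance_isHermitian (s : ℝ) (H : Matrix m n 𝕜) : (covariance s H).IsHermitian :=
  (isHermitian_one.smul (IsSelfAdjoint.all s)).add (isHermitian_mul_conjTranspose_self H)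

variable [Fintype m]

theorem covariance_posDef (hs : 0 < s) (H : Matrix m n 𝕜) : (covariance s H).PosDef :=
  (PosDef.one.smul hs).add_posSemidef (posSemidef_self_mul_conjTranspose H)

theorem isUnit_det_covariance (hs : 0 < s) (H : Matrix m n 𝕜) : IsUnit (covariance s H).det :=
  (covariance_posDef hs H).det_pos.ne'.isUnit

def mmseReceiver (s : ℝ) (H : Matrix m n 𝕜) : Matrix m n 𝕜 := (covariance s H)⁻¹ * H

theorem conjTranspose_mmseReceiver (H : Matrix m n 𝕜) :
    (mmseReceiver s H)ᴴ = Hᴴ * (covariance s H)⁻¹ := by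
  rw [mmseReceiver, conjTranspose_mul, (covariance_isHermitian s H).inv.eq]

/-- The matrix `R_t` of the minorizer, for `H_t = H`. -/
def curvature (s : ℝ) (H : Matrix m n 𝕜) : Matrix m m 𝕜 := s⁻¹ • 1 - (covariance s H)⁻¹

theorem curvature_isHermitian (s : ℝ) (H : Matrix m n 𝕜) : (curvature s H).IsHermitian :=
  (isHermitian_one.smul (IsSelfAdjoint.all s⁻¹)).sub (covariance_isHermitian s H).inv

def surrogate (s : ℝ) (Ht H : Matrix m n 𝕜) : ℝ :=
  2 * s⁻¹ * RCLike.re (Htᴴ * H).trace - RCLike.re (Hᴴ * curvature s Ht * H).trace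

theorem mmseReceiver_mul_conjTranspose (hs : 0 < s) (H : Matrix m n 𝕜) :
    mmseReceiver s H * (s⁻¹ • Hᴴ) = curvature s H := by
  have hHH : H * Hᴴ = covariance s H - s • 1 := by rw [covariance]; abel
  rw [mmseReceiver, curvature, Matrix.mul_smul, Matrix.mul_assoc, hHH, Matrix.mul_sub,
    nonsing_inv_mul _ (isUnit_det_covariance hs H), Matrix.mul_smul, Matrix.mul_one, smul_sub,
    smul_smul, inv_mul_cancel₀ hs.ne', one_smul]

theorem surrogate_add (Ht H D : Matrix m n 𝕜) :
    surrogate s Ht (H + D) = surrogate s Ht H +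
      (2 * RCLike.re ((s⁻¹ • Htᴴ - Hᴴ * curvature s Ht) * D).trace -
        RCLike.re (Dᴴ * curvature s Ht * D).trace) := by
  have hcross : RCLike.re (Dᴴ * curvature s Ht * H).trace =
      RCLike.re (Hᴴ * curvature s Ht * D).trace := by
    rw [← re_trace_conjTranspose]
    simp only [conjTranspose_mul, conjTranspose_conjTranspose, (curvature_isHermitian s Ht).eq,
      Matrix.mul_assoc]
  simp only [surrogate, conjTranspose_add, Matrix.add_mul, Matrix.mul_add, Matrix.sub_mul,
    Matrix.smul_mul, trace_add, trace_sub, trace_smul, map_add, map_sub, RCLike.smul_re, hcross]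
  ring

end

section
variable [Fintype m] [DecidableEq n]

def mmseWeight (s : ℝ) (H : Matrix m n 𝕜) : Matrix n n 𝕜 := 1 + s⁻¹ • (Hᴴ * H)

variable [Fintype n]

theorem mmseWeight_posDef (hs : 0 ≤ s) (H : Matrix m n 𝕜) : (mmseWeight s H).PosDef :=
  PosDef.one.add_posSemidef ((posSemidef_conjTranspose_mul_self H).smul (inv_nonneg.mpr hs))

end

variable [Fintype m] [Fintype n] [DecidableEq m] [DecidableEq n]

def mse (s : ℝ) (H U : Matrix m n 𝕜) : Matrix n n 𝕜 :=
  1 - Uᴴ * H - Hᴴ * U + Uᴴ * covariance s H * U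

theorem mmseWeight_mul_conjTranspose (hs : s ≠ 0) (H : Matrix m n 𝕜) :
    mmseWeight s H * Hᴴ = s⁻¹ • (Hᴴ * covariance s H) := by
  rw [mmseWeight, covariance, Matrix.add_mul, Matrix.one_mul, Matrix.smul_mul, Matrix.mul_add,
    Matrix.mul_smul, Matrix.mul_one, smul_add, smul_smul, inv_mul_cancel₀ hs, one_smul,
    Matrix.mul_assoc]

theorem mmseWeight_mul_conjTranspose_mmseReceiver (hs : 0 < s) (H : Matrix m n 𝕜) :
    mmseWeight s H * (mmseReceiver s H)ᴴ = s⁻¹ • Hᴴ := by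
  rw [conjTranspose_mmseReceiver, ← Matrix.mul_assoc, mmseWeight_mul_conjTranspose hs.ne',
    Matrix.smul_mul, Matrix.mul_assoc, mul_nonsing_inv _ (isUnit_det_covariance hs H), Matrix.mul_one]

theorem mmseReceiver_mul_mmseWeight (hs : 0 < s) (H : Matrix m n 𝕜) :
    mmseReceiver s H * mmseWeight s H = s⁻¹ • H := by
  have hW : (mmseWeight s H)ᴴ = mmseWeight s H := (mmseWeight_posDef hs.le H).isHermitian.eq
  simpa only [conjTranspose_mul, conjTranspose_smul, conjTranspose_conjTranspose, hW,
    star_trivial] using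
    congrArg conjTranspose (mmseWeight_mul_conjTranspose_mmseReceiver hs H)

theorem inv_mmseWeight (hs : 0 < s) (H : Matrix m n 𝕜) :
    (mmseWeight s H)⁻¹ = 1 - Hᴴ * (covariance s H)⁻¹ * H := by
  refine inv_eq_right_inv ?_
  rw [Matrix.mul_sub, Matrix.mul_one, ← conjTranspose_mmseReceiver, ← Matrix.mul_assoc,
    mmseWeight_mul_conjTranspose_mmseReceiver hs, Matrix.smul_mul, mmseWeight, add_sub_cancel_right]

theorem mse_eq (hs : 0 < s) (H U : Matrix m n 𝕜) :
    mse s H U = (mmseWeight s H)⁻¹ +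
      (U - mmseReceiver s H)ᴴ * covariance s H * (U - mmseReceiver s H) := by
  have hA := isUnit_det_covariance hs H
  rw [inv_mmseWeight hs, conjTranspose_sub, conjTranspose_mmseReceiver, mse, mmseReceiver]
  simp only [Matrix.sub_mul, Matrix.mul_sub, Matrix.mul_assoc, mul_nonsing_inv_cancel_left _ _ hA,
    nonsing_inv_mul_cancel_left _ _ hA]
  abel

theorem mse_mmseReceiver (hs : 0 < s) (H : Matrix m n 𝕜) :
    mse s H (mmseReceiver s H) = (mmseWeight s H)⁻¹ := by
  rw [mse_eq hs, sub_self, conjTranspose_zero, Matrix.zero_mul, Matrix.mul_zero, add_zero]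

theorem re_trace_mul_inv_mmseWeight_le {W : Matrix n n 𝕜} (hW : W.PosSemidef) (hs : 0 < s)
    (H U : Matrix m n 𝕜) :
    RCLike.re (W * (mmseWeight s H)⁻¹).trace ≤ RCLike.re (W * mse s H U).trace := by
  have hD := (covariance_posDef hs H).posSemidef.conjTranspose_mul_mul_same (U - mmseReceiver s H)
  have := RCLike.nonneg_iff.mp (hW.trace_mul_nonneg hD)
  rw [mse_eq hs, Matrix.mul_add, trace_add, map_add]
  linarith [this.1]

theorem trace_mmseWeight_mul_mse (hs : 0 < s) (Ht H : Matrix m n 𝕜) :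
    (mmseWeight s Ht * mse s H (mmseReceiver s Ht)).trace =
      (mmseWeight s Ht).trace - s⁻¹ • (Htᴴ * H).trace - s⁻¹ • (Hᴴ * Ht).trace +
        s • (curvature s Ht).trace + (Hᴴ * curvature s Ht * H).trace := by
  have hcross : (mmseWeight s Ht * (Hᴴ * mmseReceiver s Ht)).trace = s⁻¹ • (Hᴴ * Ht).trace := by
    rw [Matrix.trace_mul_comm, Matrix.mul_assoc, mmseReceiver_mul_mmseWeight hs, Matrix.mul_smul,
      trace_smul]
  have hquad : (mmseWeight s Ht * ((mmseReceiver s Ht)ᴴ * covariance s H * mmseReceiver s Ht)).trace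
      = s • (curvature s Ht).trace + (Hᴴ * curvature s Ht * H).trace := by
    rw [Matrix.mul_assoc, ← Matrix.mul_assoc, mmseWeight_mul_conjTranspose_mmseReceiver hs,
      Matrix.trace_mul_comm, Matrix.mul_assoc,
      mmseReceiver_mul_conjTranspose hs, covariance, Matrix.add_mul, trace_add, Matrix.smul_mul,
      Matrix.one_mul, trace_smul, Matrix.mul_assoc, Matrix.trace_mul_comm, Matrix.mul_assoc]
  rw [mse, Matrix.mul_add, Matrix.mul_sub, Matrix.mul_sub, Matrix.mul_one, trace_add, trace_sub,
    trace_sub, hcross, hquad, ← Matrix.mul_assoc, mmseWeight_mul_conjTranspose_mmseReceiver hs,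
    Matrix.smul_mul, trace_smul, add_assoc]

theorem re_trace_mmseWeight_mul_mse_add_surrogate (hs : 0 < s) (Ht H : Matrix m n 𝕜) :
    RCLike.re (mmseWeight s Ht * mse s H (mmseReceiver s Ht)).trace + surrogate s Ht H =
      RCLike.re (mmseWeight s Ht).trace + s * RCLike.re (curvature s Ht).trace := by
  have hconj : RCLike.re (Hᴴ * Ht).trace = RCLike.re (Htᴴ * H).trace := by
    rw [← re_trace_conjTranspose, conjTranspose_mul, conjTranspose_conjTranspose]
  rw [trace_mmseWeight_mul_mse hs, surrogate]
  simp only [map_add, map_sub, RCLike.smul_re, hconj]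
  ring

theorem surrogate_sub_le_log_det_sub (hs : 0 < s) (Ht H : Matrix m n 𝕜) :
    surrogate s Ht H - surrogate s Ht Ht ≤
      Real.log (RCLike.re (1 + s⁻¹ • (H * Hᴴ)).det) -
        Real.log (RCLike.re (1 + s⁻¹ • (Ht * Htᴴ)).det) := by
  have hdet (K : Matrix m n 𝕜) : (1 + s⁻¹ • (K * Kᴴ)).det = (mmseWeight s K).det := by
    rw [← Matrix.mul_smul, det_one_add_mul_comm, Matrix.smul_mul, mmseWeight]
  have hWt := mmseWeight_posDef hs.le Ht
  have hlogdet := hWt.log_det_sub_log_det_le (mmseWeight_posDef hs.le H)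
  have hmse := re_trace_mul_inv_mmseWeight_le hWt.posSemidef hs H (mmseReceiver s Ht)
  have hH := re_trace_mmseWeight_mul_mse_add_surrogate hs Ht H
  have hHt := re_trace_mmseWeight_mul_mse_add_surrogate hs Ht Ht
  rw [mse_mmseReceiver hs, mul_nonsing_inv _ hWt.det_pos.ne'.isUnit, trace_one,
    RCLike.natCast_re] at hHt
  rw [hdet, hdet]
  linarith

end MIMO

end

/-- Ascent property of the MM step: the capacity dominates its minorizer,
`C(Θ) ≥ C(Θ_t) + (J(Θ) − J(Θ_t))`; hence any `Θ_{t+1}` with `J(Θ_{t+1}) ≥ J(Θ_t)`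
satisfies `C(Θ_{t+1}) ≥ C(Θ_t)`, so the capacity is nondecreasing along MM iterations. -/
theorem mm_ascent_property {NR NT M : ℕ}
    (Hb : Matrix (Fin NR) (Fin NT) ℂ) (F : Matrix (Fin NR) (Fin M) ℂ)
    (Gb : Matrix (Fin NT) (Fin M) ℂ) (σ2 : ℝ) (hσ : 0 < σ2)
    (Heq : Matrix (Fin M) (Fin M) ℂ → Matrix (Fin NR) (Fin NT) ℂ)
    (hHeq : ∀ Θ, Heq Θ = Hb + F * Θ * Gbᴴ)
    (C : Matrix (Fin M) (Fin M) ℂ → ℝ)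
    (hC : ∀ Θ, C Θ = Real.log ((1 + σ2⁻¹ • (Heq Θ * (Heq Θ)ᴴ)).det.re))
    (Θt : Matrix (Fin M) (Fin M) ℂ)
    (Ht : Matrix (Fin NR) (Fin NT) ℂ) (hHt : Ht = Heq Θt)
    (Rt : Matrix (Fin NR) (Fin NR) ℂ)
    (hRt : Rt = σ2⁻¹ • (1 : Matrix (Fin NR) (Fin NR) ℂ)
        - (σ2 • (1 : Matrix (Fin NR) (Fin NR) ℂ) + Ht * Htᴴ)⁻¹)
    (hRtPSD : Rt.PosSemidef)
    (Ft : Matrix (Fin NR) (Fin M) ℂ) (hFt : Ft = (hRtPSD.1.eigenvectorUnitary : Matrix (Fin NR) (Fin NR) ℂ) *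
      Matrix.diagonal ((↑) ∘ (√·) ∘ hRtPSD.1.eigenvalues) *
      (star hRtPSD.1.eigenvectorUnitary : Matrix (Fin NR) (Fin NR) ℂ) * F)
    (Zt : Matrix (Fin NT) (Fin NR) ℂ) (hZt : Zt = σ2⁻¹ • Htᴴ - Hbᴴ * Rt)
    (J : Matrix (Fin M) (Fin M) ℂ → ℝ)
    (hJ : ∀ Θ, J Θ = 2 * (Matrix.trace (Zt * F * Θ * Gbᴴ)).re
        - (Matrix.trace ((Ft * Θ * Gbᴴ)ᴴ * (Ft * Θ * Gbᴴ))).re) :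
    (∀ Θ : Matrix (Fin M) (Fin M) ℂ, C Θ ≥ C Θt + (J Θ - J Θt)) ∧
    ∀ Θnext : Matrix (Fin M) (Fin M) ℂ, J Θnext ≥ J Θt → C Θnext ≥ C Θt := by
  have hRt' : Rt = MIMO.curvature σ2 Ht := hRt
  have hFt' : Ft = CFC.sqrt Rt * F := by rw [hFt, hRtPSD.sqrt_eq_eigenvectorUnitary_mul]; rfl
  have hJ' (Θ) : J Θ = MIMO.surrogate σ2 Ht (Heq Θ) - MIMO.surrogate σ2 Ht Hb := by
    have hassoc {k : Type} (X : Matrix k (Fin NR) ℂ) : X * F * Θ * Gbᴴ = X * (F * Θ * Gbᴴ) := by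
      simp only [Matrix.mul_assoc]
    rw [hJ, hHeq, MIMO.surrogate_add, hFt', hassoc, hassoc,
      hRtPSD.conjTranspose_sqrt_mul_mul_sqrt_mul_s11, hZt, hRt', RCLike.re_to_complex,
      RCLike.re_to_complex]
    ring
  have hminorize (Θ) : C Θ ≥ C Θt + (J Θ - J Θt) := by
    have := MIMO.surrogate_sub_le_log_det_sub hσ Ht (Heq Θ)
    rw [RCLike.re_to_complex, RCLike.re_to_complex] at this
    rw [hC, hC, hJ', hJ', ← hHt]
    linarith
  exact ⟨hminorize, fun Θ hΘ => by linarith [hminorize Θ]⟩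
end

section
/- (Eigenbeamforming structure of the optimal transmit covariance) Let H ∈ ℂ^{N_R×N_T}, σ² > 0 and P > 0, and let V ∈ ℂ^{N_T×N_T} be a unitary matrix diagonalizing HᴴH, i.e., HᴴH = V Λ Vᴴ with Λ diagonal. Then the maximum of log det(I_{N_R} + (1/σ²)·H X Hᴴ) over the set {X ∈ ℂ^{N_T×N_T} : X Hermitian positive semidefinite, tr(X) ≤ P} is attained at some X* of the form X* = V D Vᴴ, where D is a real diagonal matrix with nonnegative entries summing to at most P. -/
open Matrix
open scoped ComplexOrder

/-!
Write `G = H V`, so that `Gᴴ G = Λ = diag λ` with `λ ≥ 0`, and `Y = Vᴴ X V`, which is positive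
semidefinite with the same trace as `X`. By Sylvester's identity
`det (I + σ⁻² G Y Gᴴ) = det (I + σ⁻² √Λ Y √Λ)`, the determinant of a positive definite matrix with
diagonal entries `1 + σ⁻² λᵢ Yᵢᵢ`. Hadamard's inequality bounds it by `∏ᵢ (1 + σ⁻² λᵢ Yᵢᵢ)`, with
equality when `Y` is diagonal. So the optimum is found among `X = V diag(d) Vᴴ`, where `d` maximizes
the continuous function `∏ᵢ (1 + σ⁻² λᵢ dᵢ)` over the compact set `{d ≥ 0, ∑ dᵢ ≤ P}`.
-/

theorem Real.prod_le_one_of_sum_eq_card {ι : Type*} {s : Finset ι} {f : ι → ℝ}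
    (h0 : ∀ i ∈ s, 0 ≤ f i) (hsum : ∑ i ∈ s, f i = s.card) : ∏ i ∈ s, f i ≤ 1 :=
  calc ∏ i ∈ s, f i ≤ ∏ i ∈ s, Real.exp (f i - 1) :=
        Finset.prod_le_prod h0 fun i _ => by linarith [Real.add_one_le_exp (f i - 1)]
    _ = 1 := by simp [← Real.exp_sum, Finset.sum_sub_distrib, hsum]

theorem isCompact_setOf_nonneg_sum_le {ι : Type*} [Fintype ι] (P : ℝ) :
    IsCompact {e : ι → ℝ | (∀ i, 0 ≤ e i) ∧ ∑ i, e i ≤ P} := by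
  refine (isCompact_Icc : IsCompact (Set.Icc (0 : ι → ℝ) fun _ => P)).of_isClosed_subset ?_
    fun e he => ?_
  · simp only [Set.ofPred_and, Set.ofPred_forall]
    exact (isClosed_iInter fun i => isClosed_le continuous_const (continuous_apply i)).inter
      (isClosed_le (by fun_prop) continuous_const)
  · exact ⟨he.1, fun i => (Finset.single_le_sum (fun j _ => he.1 j) (Finset.mem_univ i)).trans he.2⟩

namespace Matrix

variable {n : Type*}

theorem IsDiag.exists_nonneg_eq_diagonal_ofReal [DecidableEq n] {Λ : Matrix n n ℂ}
    (hΛ : Λ.IsDiag) (hpsd : Λ.PosSemidef) :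
    ∃ lam : n → ℝ, (∀ i, 0 ≤ lam i) ∧ Λ = diagonal fun i => (lam i : ℂ) := by
  refine ⟨fun i => (Λ i i).re, fun i => (Complex.nonneg_iff.mp hpsd.diag_nonneg).1, ?_⟩
  ext i j
  rcases eq_or_ne i j with rfl | h
  · simpa using (hpsd.1.coe_re_apply_self i).symm
  · simp [hΛ h, h]

variable [Fintype n] [DecidableEq n]

theorem PosSemidef.det_re_le_one_of_diag_eq_one {M : Matrix n n ℂ} (hM : M.PosSemidef)
    (hdiag : ∀ i, M i i = 1) : M.det.re ≤ 1 := by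
  have hsum : ∑ i, hM.1.eigenvalues i = Fintype.card n := by
    simpa [trace, hdiag] using (congrArg Complex.re hM.1.trace_eq_sum_eigenvalues).symm
  rw [hM.1.det_eq_prod_eigenvalues]
  simpa [← Complex.ofReal_prod] using
    Real.prod_le_one_of_sum_eq_card (fun i _ => hM.eigenvalues_nonneg i) hsum

theorem PosDef.det_re_le_prod_diag_re {M : Matrix n n ℂ} (hM : M.PosDef) :
    M.det.re ≤ ∏ i, (M i i).re := by
  set a : n → ℝ := fun i => (M i i).re
  have ha : ∀ i, 0 < a i := fun i => (Complex.pos_iff.mp hM.diag_pos).1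
  have hMa : ∀ i, M i i = a i := fun i => (hM.isHermitian.coe_re_apply_self i).symm
  set D : Matrix n n ℂ := diagonal fun i => ((√(a i))⁻¹ : ℝ)
  have hN : (D * M * D).PosSemidef := by
    simpa only [show Dᴴ = D by simp [D]] using hM.posSemidef.conjTranspose_mul_mul_same D
  have hNdiag : ∀ i, (D * M * D) i i = 1 := fun i => by
    have := (Real.sqrt_pos.mpr (ha i)).ne'
    simp only [D, mul_diagonal, diagonal_mul, hMa]
    push_cast
    field_simp
    exact_mod_cast (Real.sq_sqrt (ha i).le).symm
  have hdet : (D * M * D).det.re = (∏ i, a i)⁻¹ * M.det.re := by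
    have hsq : (∏ i, (√(a i))⁻¹) * (∏ i, (√(a i))⁻¹) = (∏ i, a i)⁻¹ := by
      rw [← Finset.prod_mul_distrib, ← Finset.prod_inv_distrib]
      congr! 1 with i
      rw [← mul_inv, Real.mul_self_sqrt (ha i).le]
    rw [det_mul, det_mul, det_diagonal, ← Complex.ofReal_prod, Complex.re_mul_ofReal,
      Complex.re_ofReal_mul, ← hsq]
    ring
  have := hN.det_re_le_one_of_diag_eq_one hNdiag
  rwa [hdet, inv_mul_le_iff₀ (Finset.prod_pos fun i _ => ha i), mul_one] at this

theorem det_one_add_smul_mul_mul_comm {m : Type*} [Fintype m] [DecidableEq m]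
    (A : Matrix m n ℂ) (Y : Matrix n n ℂ) (B : Matrix n m ℂ) (c : ℝ) :
    (1 + c • (A * Y * B)).det = (1 + c • (Y * (B * A))).det := by
  rw [Matrix.mul_assoc, ← Matrix.mul_smul, det_one_add_mul_comm, Matrix.smul_mul, Matrix.mul_assoc]

theorem PosSemidef.det_one_add_smul_mul_diagonal_re_le {Y : Matrix n n ℂ} (hY : Y.PosSemidef)
    {c : ℝ} (hc : 0 ≤ c) {lam : n → ℝ} (hlam : ∀ i, 0 ≤ lam i) :
    (1 + c • (Y * diagonal fun i => (lam i : ℂ))).det.re ≤ ∏ i, (1 + c * lam i * (Y i i).re) := by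
  set S : Matrix n n ℂ := diagonal fun i => (√(lam i) : ℂ)
  have hSS : Sᴴ * S = diagonal fun i => (lam i : ℂ) := by
    simp only [S, diagonal_conjTranspose, diagonal_mul_diagonal]
    congr! 1 with i
    funext i
    simp [← Complex.ofReal_mul, Real.mul_self_sqrt (hlam i)]
  rw [← hSS, ← det_one_add_smul_mul_mul_comm]
  refine (PosDef.one.add_posSemidef ((hY.mul_mul_conjTranspose_same S).smul hc)
    ).det_re_le_prod_diag_re.trans_eq (Finset.prod_congr rfl fun i _ => ?_)
  simp [S]
  linear_combination c * (Y i i).re * Real.mul_self_sqrt (hlam i)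

variable {m : Type*} [Fintype m] [DecidableEq m] {G : Matrix m n ℂ} {lam : n → ℝ}

theorem PosSemidef.det_one_add_smul_conj_re_le (hG : Gᴴ * G = diagonal fun i => (lam i : ℂ))
    (hlam : ∀ i, 0 ≤ lam i) {c : ℝ} (hc : 0 ≤ c) {Y : Matrix n n ℂ} (hY : Y.PosSemidef) :
    (1 + c • (G * Y * Gᴴ)).det.re ≤ ∏ i, (1 + c * lam i * (Y i i).re) := by
  rw [det_one_add_smul_mul_mul_comm, hG]
  exact hY.det_one_add_smul_mul_diagonal_re_le hc hlam

theorem det_one_add_smul_conj_diagonal_re (hG : Gᴴ * G = diagonal fun i => (lam i : ℂ))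
    (c : ℝ) (e : n → ℝ) :
    (1 + c • (G * diagonal (fun i => (e i : ℂ)) * Gᴴ)).det.re = ∏ i, (1 + c * lam i * e i) := by
  have : (1 : Matrix n n ℂ) + c • (diagonal (fun i => (e i : ℂ)) * diagonal fun i => (lam i : ℂ)) =
      diagonal fun i => ((1 + c * lam i * e i : ℝ) : ℂ) := by
    ext i j
    rcases eq_or_ne i j with rfl | h
    · simp; ring
    · simp [h]
  rw [det_one_add_smul_mul_mul_comm, hG, this, det_diagonal, ← Complex.ofReal_prod,
    Complex.ofReal_re]

theorem PosSemidef.exists_det_one_add_smul_re_le_prod {V X : Matrix n n ℂ} (hV : V * Vᴴ = 1)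
    {H : Matrix m n ℂ} (hG : (H * V)ᴴ * (H * V) = diagonal fun i => (lam i : ℂ))
    (hlam : ∀ i, 0 ≤ lam i) {c : ℝ} (hc : 0 ≤ c) (hX : X.PosSemidef) {P : ℝ}
    (hXP : X.trace.re ≤ P) :
    ∃ e ∈ {e : n → ℝ | (∀ i, 0 ≤ e i) ∧ ∑ i, e i ≤ P},
      (1 + c • (H * X * Hᴴ)).det.re ≤ ∏ i, (1 + c * lam i * e i) := by
  have hY : (Vᴴ * X * V).PosSemidef := hX.conjTranspose_mul_mul_same V
  refine ⟨fun i => ((Vᴴ * X * V) i i).re,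
    ⟨fun i => (Complex.nonneg_iff.mp hY.diag_nonneg).1, ?_⟩, ?_⟩
  · rw [← Complex.re_sum]
    change (Vᴴ * X * V).trace.re ≤ P
    rwa [trace_mul_cycle, hV, Matrix.one_mul]
  · have hXY : H * X * Hᴴ = H * V * (Vᴴ * X * V) * (H * V)ᴴ := by
      simp only [conjTranspose_mul, Matrix.mul_assoc]
      simp only [← Matrix.mul_assoc, hV, Matrix.mul_one]
    rw [hXY]
    exact hY.det_one_add_smul_conj_re_le hG hlam hc

end Matrix

/-- Eigenbeamforming structure of the optimal transmit covariance:
if `HᴴH = V Λ Vᴴ` with `V` unitary and `Λ` diagonal, then the capacity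
`log det(I + (1/σ²) H X Hᴴ)` is maximized over `{X ⪰ 0, tr X ≤ P}` at some
`X* = V D Vᴴ` with `D` real diagonal, nonnegative, with entries summing to at most `P`. -/
theorem optimal_covariance_eigenbeamforming {NR NT : ℕ}
    (H : Matrix (Fin NR) (Fin NT) ℂ) (σ2 P : ℝ) (hσ : 0 < σ2) (hP : 0 < P)
    (V Λ : Matrix (Fin NT) (Fin NT) ℂ) (hV : Vᴴ * V = 1) (hΛ : Λ.IsDiag)
    (hdiag : Hᴴ * H = V * Λ * Vᴴ) :
    ∃ d : Fin NT → ℝ, (∀ i, 0 ≤ d i) ∧ (∑ i, d i) ≤ P ∧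
      (V * Matrix.diagonal (fun i => (d i : ℂ)) * Vᴴ).PosSemidef ∧
      ((V * Matrix.diagonal (fun i => (d i : ℂ)) * Vᴴ).trace).re ≤ P ∧
      ∀ X : Matrix (Fin NT) (Fin NT) ℂ, X.PosSemidef → (X.trace).re ≤ P →
        Real.log ((1 + σ2⁻¹ • (H * X * Hᴴ)).det.re) ≤
        Real.log ((1 + σ2⁻¹ •
          (H * (V * Matrix.diagonal (fun i => (d i : ℂ)) * Vᴴ) * Hᴴ)).det.re) := by
  have hc : 0 ≤ σ2⁻¹ := inv_nonneg.mpr hσ.le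
  have hVV : V * Vᴴ = 1 := mul_eq_one_comm.mp hV
  have hGram : (H * V)ᴴ * (H * V) = Λ := by
    rw [conjTranspose_mul, Matrix.mul_assoc, ← Matrix.mul_assoc Hᴴ, hdiag]
    simp only [← Matrix.mul_assoc, hV, Matrix.one_mul]
    rw [Matrix.mul_assoc, hV, Matrix.mul_one]
  obtain ⟨lam, hlam, rfl⟩ :=
    hΛ.exists_nonneg_eq_diagonal_ofReal (hGram ▸ posSemidef_conjTranspose_mul_self _)
  have hrate : Continuous fun e : Fin NT → ℝ => ∏ i, (1 + σ2⁻¹ * lam i * e i) := by fun_prop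
  obtain ⟨d, ⟨hd0, hdP⟩, hdmax⟩ := (isCompact_setOf_nonneg_sum_le P).exists_isMaxOn
    ⟨0, fun _ => le_rfl, by simpa using hP.le⟩ hrate.continuousOn
  refine ⟨d, hd0, hdP, (PosSemidef.diagonal fun i => Complex.zero_le_real.mpr (hd0 i)
    ).mul_mul_conjTranspose_same V, ?_, fun X hX hXP => ?_⟩
  · rwa [trace_mul_cycle, hV, Matrix.one_mul, trace_diagonal, ← Complex.ofReal_sum,
      Complex.ofReal_re]
  refine Real.log_le_log (Complex.pos_iff.mp (PosDef.one.add_posSemidef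
    ((hX.mul_mul_conjTranspose_same H).smul hc)).det_pos).1 ?_
  obtain ⟨e, he, hXe⟩ := hX.exists_det_one_add_smul_re_le_prod hVV hGram hlam hc hXP
  calc (1 + σ2⁻¹ • (H * X * Hᴴ)).det.re ≤ ∏ i, (1 + σ2⁻¹ * lam i * e i) := hXe
    _ ≤ ∏ i, (1 + σ2⁻¹ * lam i * d i) := hdmax he
    _ = _ := by
      rw [← det_one_add_smul_conj_diagonal_re hGram]
      simp only [conjTranspose_mul, Matrix.mul_assoc]
end
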